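/- Let G₆,₇ be the 6-dimensional real Lie algebra with basis x₁,…,x₆ and nonzero brackets [x₁,x₂]=x₄, [x₁,x₃]=x₅, [x₁,x₄]=x₆, [x₂,x₃]=−x₆. For a real number α with α ≠ 0 and α ≠ 1, define J_α by J_α x₁ = −x₂, J_α x₂ = x₁, J_α x₃ = −(1/α)x₄, J_α x₄ = α x₃, J_α x₅ = ((α−1)/α)x₆, J_α x₆ = −(α/(α−1))x₅. Then J_α² = −1 and J_α satisfies the Nijenhuis integrability condition for all X,Y ∈ G₆,₇. -/

import Mathlib

/-!
The Nijenhuis tensor `N` of an almost complex structure `J` is bilinear, antisymmetric and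
satisfies `N (J X) Y = -J (N X Y)`, so it vanishes as soon as it vanishes on pairs from a set `S`
with `S ∪ J S` spanning. For `J_α` take `S = {x₁, x₃, x₅}` (the code's `x 0, x 2, x 4`): only
`N(x₁, x₃)`, `N(x₁, x₅)`, `N(x₃, x₅)` are left to compute, and they vanish.
-/

open Submodule

lemma span_union_image_eq_top {R M ι : Type*} [Ring R] [AddCommGroup M] [Module R M]
    {J : M →ₗ[R] M} (hJ : ∀ X, J (J X) = -X) {S : Set M} (x : Module.Basis ι R M)
    (hx : ∀ i, x i ∈ span R S ∨ J (x i) ∈ span R S) : span R (S ∪ J '' S) = ⊤ := by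
  rw [eq_top_iff, ← x.span_eq, span_le, span_union, ← map_span]
  rintro _ ⟨i, rfl⟩
  rcases hx i with hS | hJS
  · exact mem_sup_left hS
  · rw [← neg_neg (x i), ← hJ (x i)]
    exact mem_sup_right (neg_mem (mem_map_of_mem hJS))

section Nijenhuis

variable {R L : Type*} [CommRing R] [LieRing L] [LieAlgebra R L]

def nijenhuis (J : L →ₗ[R] L) : L →ₗ[R] L →ₗ[R] L :=
  LinearMap.mk₂ R (fun X Y => ⁅J X, J Y⁆ - ⁅X, Y⁆ - J ⁅J X, Y⁆ - J ⁅X, J Y⁆)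
    (fun X X' Y => by simp only [map_add, add_lie]; abel)
    (fun c X Y => by simp only [map_smul, smul_lie, smul_sub])
    (fun X Y Y' => by simp only [map_add, lie_add]; abel)
    (fun c X Y => by simp only [map_smul, lie_smul, smul_sub])

@[simp]
lemma nijenhuis_apply (J : L →ₗ[R] L) (X Y : L) :
    nijenhuis J X Y = ⁅J X, J Y⁆ - ⁅X, Y⁆ - J ⁅J X, Y⁆ - J ⁅X, J Y⁆ :=
  rfl

lemma nijenhuis_swap (J : L →ₗ[R] L) (X Y : L) : nijenhuis J Y X = -nijenhuis J X Y := by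
  simp only [nijenhuis_apply, ← lie_skew X, ← lie_skew (J X), map_neg]
  abel

lemma nijenhuis_self (J : L →ₗ[R] L) (X : L) : nijenhuis J X X = 0 := by
  simp only [nijenhuis_apply, lie_self, ← lie_skew (J X) X, map_neg]
  abel

variable {J : L →ₗ[R] L}

lemma nijenhuis_apply_left (hJ : ∀ X, J (J X) = -X) (X Y : L) :
    nijenhuis J (J X) Y = -J (nijenhuis J X Y) := by
  simp only [nijenhuis_apply, hJ, map_sub, neg_lie, map_neg]
  abel

lemma nijenhuis_apply_right (hJ : ∀ X, J (J X) = -X) (X Y : L) :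
    nijenhuis J X (J Y) = -J (nijenhuis J X Y) := by
  rw [nijenhuis_swap, nijenhuis_apply_left hJ, nijenhuis_swap J X Y, map_neg, neg_neg]

lemma nijenhuis_eq_zero_of_span_union_image (hJ : ∀ X, J (J X) = -X) {S : Set L}
    (hS : span R (S ∪ J '' S) = ⊤) (h : ∀ X ∈ S, ∀ Y ∈ S, nijenhuis J X Y = 0) :
    nijenhuis J = 0 := by
  have h' : ∀ X ∈ S ∪ J '' S, ∀ Y ∈ S ∪ J '' S, nijenhuis J X Y = 0 := by
    rintro _ (hX | ⟨X, hX, rfl⟩) _ (hY | ⟨Y, hY, rfl⟩)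
    all_goals simp only [nijenhuis_apply_left hJ, nijenhuis_apply_right hJ, h _ hX _ hY,
      map_zero, neg_zero]
  refine LinearMap.ext_on hS fun X hX => LinearMap.ext_on hS fun Y hY => ?_
  simpa using h' X hX Y hY

end Nijenhuis

theorem g67_Jalpha_integrable_general
    (L : Type*) [LieRing L] [LieAlgebra ℝ L]
    (x : Module.Basis (Fin 6) ℝ L)
    (h02 : ⁅x 0, x 2⁆ = x 4)
    (h03 : ⁅x 0, x 3⁆ = x 5) (h12 : ⁅x 1, x 2⁆ = -x 5)
    (h04 : ⁅x 0, x 4⁆ = 0) (h05 : ⁅x 0, x 5⁆ = 0)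
    (h13 : ⁅x 1, x 3⁆ = 0) (h14 : ⁅x 1, x 4⁆ = 0) (h15 : ⁅x 1, x 5⁆ = 0)
    (h24 : ⁅x 2, x 4⁆ = 0) (h25 : ⁅x 2, x 5⁆ = 0)
    (h34 : ⁅x 3, x 4⁆ = 0) (h35 : ⁅x 3, x 5⁆ = 0)
    (α : ℝ) (hα0 : α ≠ 0) (hα1 : α ≠ 1)
    (J : L →ₗ[ℝ] L)
    (hJ0 : J (x 0) = -x 1) (hJ1 : J (x 1) = x 0)
    (hJ2 : J (x 2) = -(1 / α) • x 3) (hJ3 : J (x 3) = α • x 2)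
    (hJ4 : J (x 4) = ((α - 1) / α) • x 5) (hJ5 : J (x 5) = -(α / (α - 1)) • x 4) :
    (∀ X : L, J (J X) = -X) ∧
    (∀ X Y : L, ⁅J X, J Y⁆ - ⁅X, Y⁆ - J ⁅J X, Y⁆ - J ⁅X, J Y⁆ = 0) := by
  have hα1' : α - 1 ≠ 0 := sub_ne_zero.mpr hα1
  have hJJ : ∀ X, J (J X) = -X := by
    have : J ∘ₗ J = -LinearMap.id := x.ext fun i => by
      fin_cases i <;> simp [hJ0, hJ1, hJ2, hJ3, hJ4, hJ5, smul_smul] <;>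
        match_scalars <;> field_simp
    exact LinearMap.congr_fun this
  have hspan : span ℝ ({x 0, x 2, x 4} ∪ J '' {x 0, x 2, x 4}) = ⊤ :=
    span_union_image_eq_top hJJ x fun i => by
      fin_cases i <;> simp [hJ1, hJ3, hJ5, smul_mem, mem_span_of_mem]
  have hN02 : nijenhuis J (x 0) (x 2) = 0 := by
    simp only [nijenhuis_apply, hJ0, hJ2, hJ5, h02, h03, h12, h13, neg_smul, lie_neg, lie_smul,
      neg_lie, neg_zero, smul_zero, zero_sub, neg_neg, sub_neg_eq_add, map_neg, map_smul, smul_neg,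
      smul_smul]
    match_scalars
    field_simp
    ring
  have hN04 : nijenhuis J (x 0) (x 4) = 0 := by
    simp [hJ0, hJ4, h04, h05, h14, h15]
  have hN24 : nijenhuis J (x 2) (x 4) = 0 := by
    simp [hJ2, hJ4, h24, h25, h34, h35]
  have hN := nijenhuis_eq_zero_of_span_union_image hJJ hspan <| by
    rintro X (rfl | rfl | rfl) Y (rfl | rfl | rfl) <;>
      first
        | exact nijenhuis_self J _
        | assumption
        | rw [nijenhuis_swap, neg_eq_zero]; assumption
  exact ⟨hJJ, LinearMap.congr_fun₂ hN⟩

/-- On the Lie algebra `𝒢₆,₇` (`[x₁,x₂]=x₄, [x₁,x₃]=x₅, [x₁,x₄]=x₆, [x₂,x₃]=-x₆`),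
for any real `α ≠ 0, 1` the map `J_α` is an integrable almost complex structure. -/
theorem g67_Jalpha_integrable
    (L : Type*) [LieRing L] [LieAlgebra ℝ L]
    (x : Module.Basis (Fin 6) ℝ L)
    (h01 : ⁅x 0, x 1⁆ = x 3) (h02 : ⁅x 0, x 2⁆ = x 4)
    (h03 : ⁅x 0, x 3⁆ = x 5) (h12 : ⁅x 1, x 2⁆ = -x 5)
    (h04 : ⁅x 0, x 4⁆ = 0) (h05 : ⁅x 0, x 5⁆ = 0)
    (h13 : ⁅x 1, x 3⁆ = 0) (h14 : ⁅x 1, x 4⁆ = 0) (h15 : ⁅x 1, x 5⁆ = 0)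
    (h23 : ⁅x 2, x 3⁆ = 0) (h24 : ⁅x 2, x 4⁆ = 0) (h25 : ⁅x 2, x 5⁆ = 0)
    (h34 : ⁅x 3, x 4⁆ = 0) (h35 : ⁅x 3, x 5⁆ = 0) (h45 : ⁅x 4, x 5⁆ = 0)
    (α : ℝ) (hα0 : α ≠ 0) (hα1 : α ≠ 1)
    (J : L →ₗ[ℝ] L)
    (hJ0 : J (x 0) = -x 1) (hJ1 : J (x 1) = x 0)
    (hJ2 : J (x 2) = -(1 / α) • x 3) (hJ3 : J (x 3) = α • x 2)
    (hJ4 : J (x 4) = ((α - 1) / α) • x 5) (hJ5 : J (x 5) = -(α / (α - 1)) • x 4) :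
    (∀ X : L, J (J X) = -X) ∧
    (∀ X Y : L, ⁅J X, J Y⁆ - ⁅X, Y⁆ - J ⁅J X, Y⁆ - J ⁅X, J Y⁆ = 0) :=
  g67_Jalpha_integrable_general L x h02 h03 h12 h04 h05 h13 h14 h15 h24 h25 h34 h35 α hα0 hα1 J hJ0
    hJ1 hJ2 hJ3 hJ4 hJ5
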